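/- arXiv:1810.10001 — 5 statements merged into one kernel-verified Lean document; each statement's English description precedes it below -/
import Mathlib

section
/- (Piola identity.) Let f : ℝ³ → ℝ³ be twice continuously differentiable. Then at every point, ∂₁(∂₂f ×₃ ∂₃f) + ∂₂(∂₃f ×₃ ∂₁f) + ∂₃(∂₁f ×₃ ∂₂f) = 0, where ∂ᵢ denotes the partial derivative in the i-th coordinate direction and ×₃ is the cross product on ℝ³. Equivalently, the divergence (taken row-wise in the curvilinear variables) of the cofactor matrix of the Jacobian of f vanishes: ∂_{ξᵢ}(J ∇ξᵢ) = 0. -/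
open Matrix

local notation:74 a:74 " ×₃ " b:75 => crossProduct a b

/-- The partial derivative of `g : ℝ³ → ℝ³` in the `i`-th coordinate direction. -/
noncomputable def pderiv3 (i : Fin 3) (g : (Fin 3 → ℝ) → (Fin 3 → ℝ))
    (x : Fin 3 → ℝ) : Fin 3 → ℝ :=
  fderiv ℝ g x (Pi.single i 1)

/-! Differentiating each cross product by the Leibniz rule gives six terms of the form
`D²f(a, b) ×₃ Df(c)` or `Df(c) ×₃ D²f(a, b)`. Since the second derivative of a `C²` map is
symmetric, they cancel in pairs by the antisymmetry of `×₃`; this works for any three directions,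
not only the coordinate ones. -/

section

variable {E : Type*} [NormedAddCommGroup E] [NormedSpace ℝ E] {x : E}

theorem fderiv_cross_apply {u v : E → Fin 3 → ℝ} (hu : DifferentiableAt ℝ u x)
    (hv : DifferentiableAt ℝ v x) (h : E) :
    fderiv ℝ (fun y => u y ×₃ v y) x h = fderiv ℝ u x h ×₃ v x + u x ×₃ fderiv ℝ v x h := by
  have hB := (crossProduct (R := ℝ)).toContinuousBilinearMap.fderiv_of_bilinear hu hv
  simp only [LinearMap.toContinuousBilinearMap_apply] at hB
  simp [hB, add_comm]

theorem fderiv_fderiv_apply {F : Type*} [NormedAddCommGroup F] [NormedSpace ℝ F] {f : E → F}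
    (hf : DifferentiableAt ℝ (fderiv ℝ f) x) (v w : E) :
    fderiv ℝ (fun y => fderiv ℝ f y v) x w = fderiv ℝ (fderiv ℝ f) x w v := by
  simp [fderiv_clm_apply hf (differentiableAt_const v)]

theorem fderiv_cross_fderiv_cyclic_sum_eq_zero {f : E → Fin 3 → ℝ} (hf : ContDiffAt ℝ 2 f x)
    (u v w : E) :
    fderiv ℝ (fun y => fderiv ℝ f y v ×₃ fderiv ℝ f y w) x u
      + fderiv ℝ (fun y => fderiv ℝ f y w ×₃ fderiv ℝ f y u) x v
      + fderiv ℝ (fun y => fderiv ℝ f y u ×₃ fderiv ℝ f y v) x w = 0 := by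
  have hD2f : DifferentiableAt ℝ (fderiv ℝ f) x :=
    (hf.fderiv_right le_rfl).differentiableAt one_ne_zero
  have hDf (v : E) : DifferentiableAt ℝ (fun y => fderiv ℝ f y v) x :=
    hD2f.clm_apply (differentiableAt_const v)
  have hsymm : IsSymmSndFDerivAt ℝ f x := hf.isSymmSndFDerivAt (by simp)
  simp only [fderiv_cross_apply (hDf _) (hDf _), fderiv_fderiv_apply hD2f]
  rw [hsymm v u, hsymm w u, hsymm w v, ← cross_anticomm _ (fderiv ℝ f x w),
    ← cross_anticomm _ (fderiv ℝ f x v), ← cross_anticomm _ (fderiv ℝ f x u)]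
  abel

end

/-- Piola identity: for a `C²` map `f : ℝ³ → ℝ³`,
`∂₁(∂₂f ×₃ ∂₃f) + ∂₂(∂₃f ×₃ ∂₁f) + ∂₃(∂₁f ×₃ ∂₂f) = 0`, i.e. the divergence of the
cofactor matrix of the Jacobian of `f` vanishes. -/
theorem piola_identity (f : (Fin 3 → ℝ) → (Fin 3 → ℝ)) (hf : ContDiff ℝ 2 f)
    (ξ : Fin 3 → ℝ) :
    pderiv3 0 (fun x => pderiv3 1 f x ×₃ pderiv3 2 f x) ξ
      + pderiv3 1 (fun x => pderiv3 2 f x ×₃ pderiv3 0 f x) ξ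
      + pderiv3 2 (fun x => pderiv3 0 f x ×₃ pderiv3 1 f x) ξ = 0 :=
  fderiv_cross_fderiv_cyclic_sum_eq_zero hf.contDiffAt _ _ _
end

section
/- (Surface Piola identity: I_S · ∂_{ξα}(J_S ∇_S ξ_α) = 0.) Let x : ℝ² → ℝ³ be twice continuously differentiable on a neighborhood of a point p, with tangent vectors t_α(ξ) = ∂_α x(ξ), and suppose t₁ ×₃ t₂ ≠ 0 on that neighborhood; let n(ξ) = (t₁ ×₃ t₂)/‖t₁ ×₃ t₂‖ be the unit normal. Then at p, the orthogonal projection onto the tangent plane of ∂₁(t₂ ×₃ n) + ∂₂(n ×₃ t₁) vanishes: (I − n(p) n(p)ᵀ) [∂₁(t₂ ×₃ n)(p) + ∂₂(n ×₃ t₁)(p)] = 0. -/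
open scoped RealInnerProductSpace

noncomputable def cross3 (u v : EuclideanSpace ℝ (Fin 3)) : EuclideanSpace ℝ (Fin 3) :=
  WithLp.toLp 2 ![u 1 * v 2 - u 2 * v 1, u 2 * v 0 - u 0 * v 2, u 0 * v 1 - u 1 * v 0]

/-! By the product rule, the second-derivative terms `∂₁t₂ ×₃ n` and `n ×₃ ∂₂t₁` cancel, since
`∂₁t₂ = ∂₂t₁` by symmetry of the second derivative of `x`. The remainder
`u = t₂ ×₃ ∂₁n + ∂₂n ×₃ t₁` satisfies `⟪u, t₁⟫ = ⟪t₁ ×₃ t₂, ∂₁n⟫` and `⟪u, t₂⟫ = ⟪t₁ ×₃ t₂, ∂₂n⟫`,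
which vanish because `n` has constant length. Hence the tangential part of `u` is orthogonal to
`t₁`, `t₂` and `n`, which span `ℝ³`. -/

open Filter Topology

section CrossProduct

local notation "ℝ³" => EuclideanSpace ℝ (Fin 3)

lemma inner_eq_sum_three (a b : ℝ³) : ⟪a, b⟫ = a 0 * b 0 + a 1 * b 1 + a 2 * b 2 := by
  simp only [PiLp.inner_apply, RCLike.inner_apply, conj_trivial, Fin.sum_univ_three]
  ring

lemma cross3_anticomm (u v : ℝ³) : cross3 u v = -cross3 v u := by
  ext i; fin_cases i <;> simp [cross3] <;> ring

lemma inner_cross3_self_left (a b : ℝ³) : ⟪cross3 a b, a⟫ = 0 := by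
  simp only [inner_eq_sum_three, cross3, Matrix.cons_val_zero, Matrix.cons_val_one,
    Matrix.cons_val]
  ring

lemma inner_cross3_self_right (a b : ℝ³) : ⟪cross3 a b, b⟫ = 0 := by
  simp only [inner_eq_sum_three, cross3, Matrix.cons_val_zero, Matrix.cons_val_one,
    Matrix.cons_val]
  ring

lemma inner_cross3_cyclic (a b c : ℝ³) : ⟪cross3 a b, c⟫ = ⟪cross3 c a, b⟫ := by
  simp only [inner_eq_sum_three, cross3, Matrix.cons_val_zero, Matrix.cons_val_one,
    Matrix.cons_val]
  ring

lemma isBilinearMap_cross3 : IsBilinearMap ℝ cross3 where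
  add_left _ _ _ := by ext i; fin_cases i <;> simp [cross3] <;> ring
  smul_left _ _ _ := by ext i; fin_cases i <;> simp [cross3] <;> ring
  add_right _ _ _ := by ext i; fin_cases i <;> simp [cross3] <;> ring
  smul_right _ _ _ := by ext i; fin_cases i <;> simp [cross3] <;> ring

/-- The Gram determinant of `a, b, w` equals `⟪w, a ×₃ b⟫ ^ 2`. -/
lemma inner_self_mul_inner_cross3_self (a b w : ℝ³) :
    ⟪w, w⟫ * ⟪cross3 a b, cross3 a b⟫ =
      ⟪w, b⟫ ^ 2 * ⟪a, a⟫ - 2 * ⟪w, a⟫ * ⟪w, b⟫ * ⟪a, b⟫ + ⟪w, a⟫ ^ 2 * ⟪b, b⟫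
        + ⟪w, cross3 a b⟫ ^ 2 := by
  simp only [inner_eq_sum_three, cross3, Matrix.cons_val_zero, Matrix.cons_val_one,
    Matrix.cons_val]
  ring

lemma eq_zero_of_inner_eq_zero_of_cross3_ne_zero {a b w : ℝ³} (hab : cross3 a b ≠ 0)
    (ha : ⟪w, a⟫ = 0) (hb : ⟪w, b⟫ = 0) (hc : ⟪w, cross3 a b⟫ = 0) : w = 0 := by
  have h := inner_self_mul_inner_cross3_self a b w
  rw [ha, hb, hc] at h
  have hw : ⟪w, w⟫ * ⟪cross3 a b, cross3 a b⟫ = 0 := by rw [h]; ring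
  exact inner_self_eq_zero.1 <|
    (mul_eq_zero.1 hw).resolve_right (inner_self_ne_zero.2 hab)

lemma cross3_piola_sub_inner_smul_eq_zero {a b A N₀ N₁ ν : ℝ³} (hab : cross3 a b ≠ 0)
    (hν : ν = ‖cross3 a b‖⁻¹ • cross3 a b) (h₀ : ⟪ν, N₀⟫ = 0) (h₁ : ⟪ν, N₁⟫ = 0) :
    (cross3 A ν + cross3 b N₀ + (cross3 N₁ a + cross3 ν A))
      - ⟪ν, cross3 A ν + cross3 b N₀ + (cross3 N₁ a + cross3 ν A)⟫ • ν = 0 := by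
  have hA : cross3 A ν + cross3 b N₀ + (cross3 N₁ a + cross3 ν A)
      = cross3 b N₀ + cross3 N₁ a := by
    rw [cross3_anticomm ν A]; abel
  rw [hA]
  set u := cross3 b N₀ + cross3 N₁ a
  have hc : cross3 a b = ‖cross3 a b‖ • ν := by rw [hν, smul_inv_smul₀ (norm_ne_zero_iff.2 hab)]
  have hcN (N : ℝ³) (h : ⟪ν, N⟫ = 0) : ⟪cross3 a b, N⟫ = 0 := by
    rw [hc, real_inner_smul_left, h, mul_zero]
  have hνν : ⟪ν, ν⟫ = 1 := by
    rw [real_inner_self_eq_norm_sq, hν, norm_smul, norm_inv, norm_norm,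
      inv_mul_cancel₀ (norm_ne_zero_iff.2 hab), one_pow]
  have hνa : ⟪ν, a⟫ = 0 := by rw [hν, real_inner_smul_left, inner_cross3_self_left, mul_zero]
  have hνb : ⟪ν, b⟫ = 0 := by rw [hν, real_inner_smul_left, inner_cross3_self_right, mul_zero]
  have hua : ⟪u, a⟫ = 0 := by
    rw [inner_add_left, inner_cross3_cyclic b N₀ a, inner_cross3_self_right, hcN N₀ h₀, add_zero]
  have hub : ⟪u, b⟫ = 0 := by
    rw [inner_add_left, ← inner_cross3_cyclic a b N₁, inner_cross3_self_left, hcN N₁ h₁, add_zero]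
  apply eq_zero_of_inner_eq_zero_of_cross3_ne_zero hab
  · rw [inner_sub_left, real_inner_smul_left, hua, hνa]; ring
  · rw [inner_sub_left, real_inner_smul_left, hub, hνb]; ring
  · rw [hc, real_inner_smul_right, inner_sub_left, real_inner_smul_left, hνν, real_inner_comm]
    ring

end CrossProduct

section Calculus

variable {E : Type*} [NormedAddCommGroup E] [NormedSpace ℝ E]

lemma fderiv_cross3_apply {f g : E → EuclideanSpace ℝ (Fin 3)} {p : E}
    (hf : DifferentiableAt ℝ f p) (hg : DifferentiableAt ℝ g p) (v : E) :
    fderiv ℝ (fun ξ => cross3 (f ξ) (g ξ)) p v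
      = cross3 (fderiv ℝ f p v) (g p) + cross3 (f p) (fderiv ℝ g p v) := by
  have h := isBilinearMap_cross3.toContinuousBilinearMap.fderiv_of_bilinear hf hg
  simp only [IsBilinearMap.toContinuousBilinearMap_apply] at h
  simp [h, add_comm]

lemma DifferentiableAt.cross3 {f g : E → EuclideanSpace ℝ (Fin 3)} {p : E}
    (hf : DifferentiableAt ℝ f p) (hg : DifferentiableAt ℝ g p) :
    DifferentiableAt ℝ (fun ξ => cross3 (f ξ) (g ξ)) p :=
  (isBilinearMap_cross3.toContinuousBilinearMap.hasFDerivAt_of_bilinear hf.hasFDerivAt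
    hg.hasFDerivAt).differentiableAt

lemma inner_fderiv_eq_zero_of_norm_eventually_eq {F : Type*} [NormedAddCommGroup F]
    [InnerProductSpace ℝ F] {n : E → F} {p : E} {r : ℝ} (hn : DifferentiableAt ℝ n p)
    (hr : ∀ᶠ ξ in 𝓝 p, ‖n ξ‖ = r) (v : E) : ⟪n p, fderiv ℝ n p v⟫ = 0 := by
  have hconst : (fun ξ => ⟪n ξ, n ξ⟫) =ᶠ[𝓝 p] fun _ => r ^ 2 := by
    filter_upwards [hr] with ξ hξ
    rw [real_inner_self_eq_norm_sq, hξ]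
  have h : fderiv ℝ (fun ξ => ⟪n ξ, n ξ⟫) p v = 0 := by
    rw [hconst.fderiv_eq]; simp
  rw [fderiv_inner_apply ℝ hn hn, real_inner_comm (n p)] at h
  linarith

lemma fderiv_fderiv_apply_const {G : Type*} [NormedAddCommGroup G] [NormedSpace ℝ G]
    {x : E → G} {p : E} (hx : DifferentiableAt ℝ (fderiv ℝ x) p) (v w : E) :
    fderiv ℝ (fun ξ => fderiv ℝ x ξ w) p v = fderiv ℝ (fderiv ℝ x) p v w := by
  rw [fderiv_clm_apply hx (differentiableAt_const w)]
  simp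

end Calculus

/-- Surface Piola identity: for a `C²` parametrization `x : ℝ² → ℝ³` with tangent vectors
`t_α = ∂_α x` satisfying `t₁ ×₃ t₂ ≠ 0` near `p`, and unit normal
`n = (t₁ ×₃ t₂)/‖t₁ ×₃ t₂‖`, the tangential projection of
`∂₁(t₂ ×₃ n) + ∂₂(n ×₃ t₁)` vanishes at `p`. -/
theorem surface_piola_identity (x : (Fin 2 → ℝ) → EuclideanSpace ℝ (Fin 3))
    (U : Set (Fin 2 → ℝ)) (hU : IsOpen U) (p : Fin 2 → ℝ) (hp : p ∈ U)
    (hx : ContDiffOn ℝ 2 x U)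
    (t : Fin 2 → (Fin 2 → ℝ) → EuclideanSpace ℝ (Fin 3))
    (ht : ∀ α ξ, t α ξ = fderiv ℝ x ξ (Pi.single α 1))
    (hreg : ∀ ξ ∈ U, cross3 (t 0 ξ) (t 1 ξ) ≠ 0)
    (n : (Fin 2 → ℝ) → EuclideanSpace ℝ (Fin 3))
    (hn : ∀ ξ, n ξ = ‖cross3 (t 0 ξ) (t 1 ξ)‖⁻¹ • cross3 (t 0 ξ) (t 1 ξ)) :
    (fderiv ℝ (fun ξ => cross3 (t 1 ξ) (n ξ)) p (Pi.single 0 1)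
        + fderiv ℝ (fun ξ => cross3 (n ξ) (t 0 ξ)) p (Pi.single 1 1))
      - ⟪n p, fderiv ℝ (fun ξ => cross3 (t 1 ξ) (n ξ)) p (Pi.single 0 1)
            + fderiv ℝ (fun ξ => cross3 (n ξ) (t 0 ξ)) p (Pi.single 1 1)⟫ • n p
      = 0 := by
  have hxp : ContDiffAt ℝ 2 x p := hx.contDiffAt (hU.mem_nhds hp)
  have hDx : DifferentiableAt ℝ (fderiv ℝ x) p :=
    (hxp.fderiv_right (m := 1) le_rfl).differentiableAt one_ne_zero
  have ht' (α : Fin 2) : t α = fun ξ => fderiv ℝ x ξ (Pi.single α 1) := funext (ht α)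
  have htd (α : Fin 2) : DifferentiableAt ℝ (t α) p := by
    rw [ht' α]; exact hDx.clm_apply (differentiableAt_const _)
  have hDt (α : Fin 2) (v : Fin 2 → ℝ) :
      fderiv ℝ (t α) p v = fderiv ℝ (fderiv ℝ x) p v (Pi.single α 1) := by
    rw [ht' α, fderiv_fderiv_apply_const hDx]
  have hnd : DifferentiableAt ℝ n p := by
    have hcd := (htd 0).cross3 (htd 1)
    rw [funext hn]
    exact ((hcd.norm ℝ (hreg p hp)).inv (norm_ne_zero_iff.2 (hreg p hp))).smul hcd
  have hnN : ∀ v, ⟪n p, fderiv ℝ n p v⟫ = 0 :=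
    inner_fderiv_eq_zero_of_norm_eventually_eq hnd <| eventually_of_mem
      (hU.mem_nhds hp) fun ξ hξ => by rw [hn ξ]; exact norm_smul_inv_norm (hreg ξ hξ)
  rw [fderiv_cross3_apply (htd 1) hnd, fderiv_cross3_apply hnd (htd 0), hDt, hDt,
    (hxp.isSymmSndFDerivAt (by simp)).eq (Pi.single 1 1)]
  exact cross3_piola_sub_inner_smul_eq_zero (hreg p hp) (hn p) (hnN _) (hnN _)
end

section
/- (Relation between the boundary exterior differential operator and the boundary nabla operator, eq. (6): D_S φ = ∇_S φ − n (∇_S · n) φ.) Let n : ℝ³ → ℝ³ and φ : ℝ³ → ℝ be differentiable at x ∈ ℝ³, and suppose ⟪n(x), n(x)⟫ = 1. Write P_{ik}(y) = δ_{ik} − nᵢ(y) nₖ(y) and let the tangential derivative of a function ψ be (∂_{S,i} ψ)(y) = Σₖ P_{ik}(y) (∂ₖ ψ)(y). Then for each j ∈ {1,2,3}: Σᵢ ∂_{S,i}(P_{ij} φ)(x) = (∂_{S,j} φ)(x) − nⱼ(x) (Σᵢ ∂_{S,i} nᵢ)(x) · φ(x). -/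
/-!
Tangential derivatives obey the product rule, and since `n` has unit length, `P` annihilates it:
`Σᵢ nᵢ P_{ik} = 0`, hence `Σᵢ nᵢ ∂_{S,i} = 0`. Expanding `∂_{S,i}(P_{ij} φ)` by the product
rule, the term `Σᵢ P_{ij} ∂_{S,i} φ = ∂_{S,j} φ − nⱼ Σᵢ nᵢ ∂_{S,i} φ` reduces to `∂_{S,j} φ`, and
`Σᵢ ∂_{S,i} P_{ij} = −Σᵢ nᵢ ∂_{S,i} nⱼ − nⱼ Σᵢ ∂_{S,i} nᵢ` reduces to `−nⱼ (∇_S · n)`.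
-/

/-- The partial derivative of `ψ : ℝ³ → ℝ` in the `k`-th coordinate direction. -/
noncomputable def pd (k : Fin 3) (ψ : (Fin 3 → ℝ) → ℝ) (y : Fin 3 → ℝ) : ℝ :=
  fderiv ℝ ψ y (Pi.single k 1)

/-- The surface identity tensor `P = I − n nᵀ` associated with a unit normal field `n`. -/
def P (n : (Fin 3 → ℝ) → (Fin 3 → ℝ)) (i k : Fin 3) (y : Fin 3 → ℝ) : ℝ :=
  (if i = k then (1 : ℝ) else 0) - n y i * n y k

/-- The boundary (tangential) directional derivative `∂_{S,i} ψ = Σₖ P_{ik} ∂ₖ ψ`. -/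
noncomputable def pdS (n : (Fin 3 → ℝ) → (Fin 3 → ℝ)) (i : Fin 3)
    (ψ : (Fin 3 → ℝ) → ℝ) (y : Fin 3 → ℝ) : ℝ :=
  ∑ k, P n i k y * pd k ψ y

open Finset

section TangentialCalculus

variable {n : (Fin 3 → ℝ) → (Fin 3 → ℝ)} {x : Fin 3 → ℝ}

theorem pd_mul {f g : (Fin 3 → ℝ) → ℝ} (hf : DifferentiableAt ℝ f x)
    (hg : DifferentiableAt ℝ g x) (k : Fin 3) :
    pd k (fun y => f y * g y) x = f x * pd k g x + g x * pd k f x := by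
  simp only [pd, fderiv_fun_mul hf hg]
  rfl

theorem pd_const_sub (c : ℝ) (f : (Fin 3 → ℝ) → ℝ) (k : Fin 3) :
    pd k (fun y => c - f y) x = -pd k f x := by
  simp only [pd, fderiv_const_sub, neg_apply]

theorem pdS_mul {f g : (Fin 3 → ℝ) → ℝ} (hf : DifferentiableAt ℝ f x)
    (hg : DifferentiableAt ℝ g x) (i : Fin 3) :
    pdS n i (fun y => f y * g y) x = f x * pdS n i g x + g x * pdS n i f x := by
  simp only [pdS, pd_mul hf hg, mul_add, sum_add_distrib, mul_sum]
  congr 1 <;> exact sum_congr rfl fun _ _ => by ring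

theorem pdS_const_sub (c : ℝ) (f : (Fin 3 → ℝ) → ℝ) (i : Fin 3) :
    pdS n i (fun y => c - f y) x = -pdS n i f x := by
  simp only [pdS, pd_const_sub, mul_neg, sum_neg_distrib]

theorem sum_mul_P_eq_zero (hunit : ∑ i, n x i * n x i = 1) (k : Fin 3) :
    ∑ i, n x i * P n i k x = 0 := by
  simp only [P, mul_sub, mul_ite, mul_one, mul_zero, sum_sub_distrib, sum_ite_eq', mem_univ,
    if_true, ← mul_assoc, ← sum_mul, hunit, one_mul, sub_self]

theorem sum_mul_pdS_eq_zero (hunit : ∑ i, n x i * n x i = 1) (ψ : (Fin 3 → ℝ) → ℝ) :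
    ∑ i, n x i * pdS n i ψ x = 0 := by
  simp only [pdS, mul_sum, ← mul_assoc]
  rw [sum_comm]
  simp only [← sum_mul, sum_mul_P_eq_zero hunit, zero_mul, sum_const_zero]

theorem sum_P_mul_pdS (hunit : ∑ i, n x i * n x i = 1) (j : Fin 3) (ψ : (Fin 3 → ℝ) → ℝ) :
    ∑ i, P n i j x * pdS n i ψ x = pdS n j ψ x := by
  simp only [P, sub_mul, ite_mul, one_mul, zero_mul, sum_sub_distrib, sum_ite_eq', mem_univ,
    if_true, mul_right_comm (n x _) (n x j), ← sum_mul, sum_mul_pdS_eq_zero hunit, zero_mul,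
    sub_zero]

theorem differentiableAt_P (hn : DifferentiableAt ℝ n x) (i k : Fin 3) :
    DifferentiableAt ℝ (P n i k) x :=
  (differentiableAt_const _).sub
    ((differentiableAt_pi.mp hn i).mul (differentiableAt_pi.mp hn k))

theorem pdS_P (hn : DifferentiableAt ℝ n x) (i k j : Fin 3) :
    pdS n i (P n k j) x
      = -(n x k * pdS n i (fun y => n y j) x + n x j * pdS n i (fun y => n y k) x) := by
  rw [show P n k j = fun y => (if k = j then (1 : ℝ) else 0) - n y k * n y j from rfl,
    pdS_const_sub, pdS_mul (differentiableAt_pi.mp hn k) (differentiableAt_pi.mp hn j)]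

end TangentialCalculus

/-- Relation between the boundary exterior differential operator and the boundary nabla
operator: `D_S φ = ∇_S φ − n (∇_S · n) φ`, componentwise
`Σᵢ ∂_{S,i}(P_{ij} φ) = ∂_{S,j} φ − nⱼ (Σᵢ ∂_{S,i} nᵢ) φ`. -/
theorem exterior_diff_eq_nabla_sub_curvature
    (n : (Fin 3 → ℝ) → (Fin 3 → ℝ)) (φ : (Fin 3 → ℝ) → ℝ) (x : Fin 3 → ℝ)
    (hn : DifferentiableAt ℝ n x) (hφ : DifferentiableAt ℝ φ x)
    (hunit : ∑ i, n x i * n x i = 1) (j : Fin 3) :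
    ∑ i, pdS n i (fun y => P n i j y * φ y) x
      = pdS n j φ x - n x j * (∑ i, pdS n i (fun y => n y i) x) * φ x := by
  calc ∑ i, pdS n i (fun y => P n i j y * φ y) x
      = ∑ i, P n i j x * pdS n i φ x + φ x * ∑ i, pdS n i (P n i j) x := by
        simp only [pdS_mul (differentiableAt_P hn _ j) hφ, sum_add_distrib, mul_sum]
    _ = pdS n j φ x - n x j * (∑ i, pdS n i (fun y => n y i) x) * φ x := by
        simp only [sum_P_mul_pdS hunit, pdS_P hn, sum_neg_distrib, sum_add_distrib,
          sum_mul_pdS_eq_zero hunit, ← mul_sum]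
        ring
end

section
/- (Variation of the unit normal, eq. (37): δn = −(∇_S ρ) · n.) Let a, b ∈ ℝ³ with a ×₃ b ≠ 0, let n = (a ×₃ b)/‖a ×₃ b‖, and let G be a real 3×3 matrix. Then the function ε ↦ ((a + ε G a) ×₃ (b + ε G b)) / ‖(a + ε G a) ×₃ (b + ε G b)‖ is differentiable at ε = 0 with derivative −(I − n nᵀ)(Gᵀ n), i.e. −(Gᵀ n − ⟪n, Gᵀ n⟫ n). -/
/-!
The curve `c ε = (a + ε G a) ×₃ (b + ε G b)` is quadratic in `ε`, with velocity
`(G a) ×₃ b + a ×₃ (G b) = (tr G) (a ×₃ b) - Gᵀ (a ×₃ b)` at `ε = 0`. Differentiating `c / ‖c‖`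
projects `c' / ‖c‖` onto the plane orthogonal to `n`; the trace term is parallel to `n` and drops
out, leaving `-(I - n nᵀ) Gᵀ n`.
-/

open scoped RealInnerProductSpace

noncomputable def mulv (G : Matrix (Fin 3) (Fin 3) ℝ) (v : EuclideanSpace ℝ (Fin 3)) :
    EuclideanSpace ℝ (Fin 3) :=
  WithLp.toLp 2 (G.mulVec v)

section Normalize

variable {E : Type*} [NormedAddCommGroup E] [InnerProductSpace ℝ E] {c : ℝ → E} {c' : E} {t : ℝ}

theorem HasDerivAt.norm (hc : HasDerivAt c c' t) (h0 : c t ≠ 0) :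
    HasDerivAt (fun s => ‖c s‖) (⟪c t, c'⟫ / ‖c t‖) t := by
  have hsq : ‖c t‖ ^ 2 ≠ 0 := by positivity
  have hroot := hc.norm_sq.sqrt hsq
  simp only [Real.sqrt_sq (norm_nonneg _)] at hroot
  convert hroot using 1
  field_simp

theorem HasDerivAt.norm_inv_smul (hc : HasDerivAt c c' t) (h0 : c t ≠ 0) :
    let n := ‖c t‖⁻¹ • c t
    HasDerivAt (fun s => ‖c s‖⁻¹ • c s) (‖c t‖⁻¹ • (c' - ⟪n, c'⟫ • n)) t := by
  have hr : ‖c t‖ ≠ 0 := norm_ne_zero_iff.mpr h0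
  have hinv : HasDerivAt (fun s => ‖c s‖⁻¹) (-(⟪c t, c'⟫ / ‖c t‖) / ‖c t‖ ^ 2) t :=
    (hc.norm h0).inv hr
  refine (hinv.smul hc).congr_deriv ?_
  simp only [real_inner_smul_left, smul_sub, smul_smul]
  match_scalars <;> field_simp

end Normalize

theorem hasDerivAt_add_smul_add_sq_smul {F : Type*} [NormedAddCommGroup F] [NormedSpace ℝ F]
    (p q r : F) : HasDerivAt (fun ε : ℝ => p + ε • q + ε ^ 2 • r) q 0 := by
  have hlin := ((hasDerivAt_id (0 : ℝ)).smul_const q).const_add p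
  have hquad := (hasDerivAt_pow 2 (0 : ℝ)).smul_const r
  exact (hlin.add hquad).congr_deriv (by simp)

theorem cross3_add_smul_add_smul (a b x y : EuclideanSpace ℝ (Fin 3)) (ε : ℝ) :
    cross3 (a + ε • x) (b + ε • y) =
      cross3 a b + ε • (cross3 x b + cross3 a y) + ε ^ 2 • cross3 x y := by
  ext i
  fin_cases i <;> · simp [cross3]; ring

theorem hasDerivAt_cross3_add_smul_add_smul (a b x y : EuclideanSpace ℝ (Fin 3)) :
    HasDerivAt (fun ε : ℝ => cross3 (a + ε • x) (b + ε • y)) (cross3 x b + cross3 a y) 0 := by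
  rw [funext (cross3_add_smul_add_smul a b x y)]
  exact hasDerivAt_add_smul_add_sq_smul _ _ _

theorem mulv_smul (G : Matrix (Fin 3) (Fin 3) ℝ) (s : ℝ) (v : EuclideanSpace ℝ (Fin 3)) :
    mulv G (s • v) = s • mulv G v := by
  ext i
  simp [mulv, Matrix.mulVec_smul]

-- The derivative at `A = 1` of `(A a) ×₃ (A b) = (adj A)ᵀ (a ×₃ b)`.
theorem cross3_mulv_add_cross3_mulv (G : Matrix (Fin 3) (Fin 3) ℝ)
    (a b : EuclideanSpace ℝ (Fin 3)) :
    cross3 (mulv G a) b + cross3 a (mulv G b) =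
      G.trace • cross3 a b - mulv G.transpose (cross3 a b) := by
  ext i
  fin_cases i <;>
  · simp [cross3, mulv, Matrix.mulVec, dotProduct, Fin.sum_univ_three, Matrix.trace]
    ring

/-- Variation of the unit normal `δn = −(∇_S ρ)·n`: with `n = (a ×₃ b)/‖a ×₃ b‖`, the
function `ε ↦ ((a + ε G a) ×₃ (b + ε G b)) / ‖(a + ε G a) ×₃ (b + ε G b)‖` is
differentiable at `ε = 0` with derivative `−(I − n nᵀ)(Gᵀ n) = −(Gᵀ n − ⟪n, Gᵀ n⟫ n)`. -/
theorem hasDerivAt_unit_normal (a b : EuclideanSpace ℝ (Fin 3))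
    (h : cross3 a b ≠ 0) (G : Matrix (Fin 3) (Fin 3) ℝ) :
    let n := ‖cross3 a b‖⁻¹ • cross3 a b
    HasDerivAt
      (fun ε : ℝ => ‖cross3 (a + ε • mulv G a) (b + ε • mulv G b)‖⁻¹ •
        cross3 (a + ε • mulv G a) (b + ε • mulv G b))
      (-(mulv G.transpose n - ⟪n, mulv G.transpose n⟫ • n)) 0 := by
  intro n
  have hcross := hasDerivAt_cross3_add_smul_add_smul a b (mulv G a) (mulv G b)
  rw [cross3_mulv_add_cross3_mulv] at hcross
  have hnormal := hcross.norm_inv_smul (by simpa using h)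
  simp only [zero_smul, add_zero] at hnormal
  refine hnormal.congr_deriv ?_
  have hr : ‖cross3 a b‖ ≠ 0 := norm_ne_zero_iff.mpr h
  simp only [n, mulv_smul, inner_sub_right, real_inner_smul_left, real_inner_smul_right,
    real_inner_self_eq_norm_sq, smul_sub, smul_smul]
  match_scalars
  · field_simp
    ring
  · field_simp
end

section
/- (Reynolds transport theorem in derivative form, eq. (40): d/dε ∫_{V_ε} φ dV |_{ε=0} = ∫_{V₀} ∇·(ρ φ) dV.) Let φ : ℝ³ → ℝ and ρ : ℝ³ → ℝ³ be continuously differentiable, and let K ⊂ ℝ³ be a compact measurable set. Then the function F(ε) = ∫_K φ(x + ε ρ(x)) · det(I + ε Dρ(x)) dx is differentiable at ε = 0 with derivative F'(0) = ∫_K div(φ ρ)(x) dx = ∫_K ( ρ(x)·∇φ(x) + φ(x) div ρ(x) ) dx. -/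
/-!
The integrand is `Ψ (ε, x, Dρ x)` with `Ψ (ε, y, A) = φ (y + ε • ρ y) * det (1 + ε • A)`.
Treating the Jacobian as an independent variable makes `Ψ` jointly `C¹` although `Dρ` is only
continuous; the `ε`-derivative of the integrand is then continuous in `(ε, x)`, hence bounded on
`[-1, 1] × K`, and dominated convergence lets us differentiate under the integral sign. At `ε = 0`
the product rule and `d/dε det (1 + ε • A) = trace A` give the integrand
`Dφ x (ρ x) + φ x * div ρ x`.
-/

open MeasureTheory

noncomputable def jacMat (ρ : (Fin 3 → ℝ) → (Fin 3 → ℝ)) (x : Fin 3 → ℝ) :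
    Matrix (Fin 3) (Fin 3) ℝ :=
  Matrix.of fun i j => fderiv ℝ ρ x (Pi.single j 1) i

open Polynomial in
theorem Matrix.hasDerivAt_det_one_add_smul {𝕜 n : Type*} [NontriviallyNormedField 𝕜]
    [Fintype n] [DecidableEq n] (A : Matrix n n 𝕜) :
    HasDerivAt (fun t : 𝕜 => (1 + t • A).det) A.trace 0 := by
  have h := (det (1 + (X : 𝕜[X]) • A.map C)).hasDerivAt 0
  rw [derivative_det_one_add_X_smul] at h
  convert h using 1
  ext t
  simp [eval_det, ← smul_eq_mul_diagonal]

theorem hasDerivAt_mul_det_one_add_smul {𝕜 E n : Type*} [NontriviallyNormedField 𝕜]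
    [NormedAddCommGroup E] [NormedSpace 𝕜 E] [Fintype n] [DecidableEq n] {φ : E → 𝕜} {x : E}
    (hφ : DifferentiableAt 𝕜 φ x) (v : E) (A : Matrix n n 𝕜) :
    HasDerivAt (fun t : 𝕜 => φ (x + t • v) * (1 + t • A).det)
      (fderiv 𝕜 φ x v + φ x * A.trace) 0 := by
  have hline : HasDerivAt (fun t : 𝕜 => x + t • v) v 0 := by
    simpa using ((hasDerivAt_id (0 : 𝕜)).smul_const v).const_add x
  have hφx : HasFDerivAt φ (fderiv 𝕜 φ x) (x + (0 : 𝕜) • v) := by simpa using hφ.hasFDerivAt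
  have hφt := hφx.comp_hasDerivAt 0 hline
  exact (hφt.mul (Matrix.hasDerivAt_det_one_add_smul A)).congr_deriv (by simp)

section
attribute [local instance] Matrix.normedAddCommGroup Matrix.normedSpace

theorem Matrix.contDiff_det {𝕜 n : Type*} [NontriviallyNormedField 𝕜] [Fintype n]
    [DecidableEq n] {k : WithTop ℕ∞} : ContDiff 𝕜 k (Matrix.det : Matrix n n 𝕜 → 𝕜) := by
  rw [funext (Matrix.det_apply' (R := 𝕜) (n := n))]
  fun_prop

end

theorem hasDerivAt_setIntegral_of_contDiff {X Y : Type*} [TopologicalSpace X] [T2Space X]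
    [MeasurableSpace X] [OpensMeasurableSpace X] {μ : Measure X} [IsFiniteMeasureOnCompacts μ]
    [NormedAddCommGroup Y] [NormedSpace ℝ Y] {Ψ : ℝ × Y → ℝ} (hΨ : ContDiff ℝ 1 Ψ)
    {Ψ' : Y → ℝ} {t₀ : ℝ} (hΨ' : ∀ y, HasDerivAt (fun t => Ψ (t, y)) (Ψ' y) t₀)
    {u : X → Y} (hu : Continuous u) {K : Set X} (hK : IsCompact K) :
    HasDerivAt (fun t => ∫ x in K, Ψ (t, u x) ∂μ) (∫ x in K, Ψ' (u x) ∂μ) t₀ := by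
  have hderiv (t : ℝ) (y : Y) : HasDerivAt (fun s => Ψ (s, y)) (fderiv ℝ Ψ (t, y) (1, 0)) t :=
    (hΨ.differentiable one_ne_zero _).hasFDerivAt.comp_hasDerivAt t
      ((hasDerivAt_id t).prodMk (hasDerivAt_const t y))
  have hcont : Continuous fun p : ℝ × X => fderiv ℝ Ψ (p.1, u p.2) (1, 0) :=
    ((hΨ.continuous_fderiv one_ne_zero).comp
      (continuous_fst.prodMk (hu.comp continuous_snd))).clm_apply continuous_const
  obtain ⟨C, hC⟩ :=
    ((isCompact_closedBall t₀ 1).prod hK).exists_bound_of_continuousOn hcont.continuousOn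
  have hΨu (t : ℝ) : Continuous fun x => Ψ (t, u x) :=
    hΨ.continuous.comp (continuous_const.prodMk hu)
  have h := (hasDerivAt_integral_of_dominated_loc_of_deriv_le (μ := μ.restrict K)
    (Metric.ball_mem_nhds t₀ one_pos) (.of_forall fun t => (hΨu t).aestronglyMeasurable)
    ((hΨu t₀).continuousOn.integrableOn_compact hK)
    (hcont.comp (continuous_const.prodMk continuous_id)).aestronglyMeasurable
    (ae_restrict_of_forall_mem hK.measurableSet fun x hx t ht =>
      hC (t, x) ⟨Metric.ball_subset_closedBall ht, hx⟩)
    (integrableOn_const hK.measure_lt_top.ne) (.of_forall fun x t _ => hderiv t (u x))).2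
  rwa [funext fun x => (hderiv t₀ (u x)).unique (hΨ' (u x))] at h

theorem continuous_jacMat {ρ : (Fin 3 → ℝ) → (Fin 3 → ℝ)} (hρ : ContDiff ℝ 1 ρ) :
    Continuous (jacMat ρ) :=
  continuous_matrix fun i _ =>
    (continuous_apply i).comp ((hρ.continuous_fderiv one_ne_zero).clm_apply continuous_const)

theorem reynolds_transport_general (φ : (Fin 3 → ℝ) → ℝ) (ρ : (Fin 3 → ℝ) → (Fin 3 → ℝ))
    (hφ : ContDiff ℝ 1 φ) (hρ : ContDiff ℝ 1 ρ)
    (K : Set (Fin 3 → ℝ)) (hK : IsCompact K) :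
    HasDerivAt
      (fun ε : ℝ => ∫ x in K, φ (x + ε • ρ x) * (1 + ε • jacMat ρ x).det)
      (∫ x in K, (fderiv ℝ φ x (ρ x) + φ x * (jacMat ρ x).trace)) 0 := by
  let : NormedAddCommGroup (Matrix (Fin 3) (Fin 3) ℝ) := Matrix.normedAddCommGroup
  let : NormedSpace ℝ (Matrix (Fin 3) (Fin 3) ℝ) := Matrix.normedSpace
  let Ψ : ℝ × ((Fin 3 → ℝ) × Matrix (Fin 3) (Fin 3) ℝ) → ℝ := fun p =>
    φ (p.2.1 + p.1 • ρ p.2.1) * (1 + p.1 • p.2.2).det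
  have hΨ : ContDiff ℝ 1 Ψ := by
    have hdet := Matrix.contDiff_det (𝕜 := ℝ) (n := Fin 3) (k := 1)
    fun_prop
  exact hasDerivAt_setIntegral_of_contDiff hΨ
    (fun y => hasDerivAt_mul_det_one_add_smul (hφ.differentiable one_ne_zero y.1) (ρ y.1) y.2)
    (continuous_id.prodMk (continuous_jacMat hρ)) hK

/-- Reynolds transport theorem in derivative form: for `C¹` functions `φ : ℝ³ → ℝ` and
`ρ : ℝ³ → ℝ³` and a compact measurable set `K`, the function
`F(ε) = ∫_K φ(x + ε ρ(x)) det(I + ε Dρ(x)) dx` is differentiable at `ε = 0` with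
derivative `∫_K div(φ ρ) = ∫_K (ρ·∇φ + φ div ρ)`. -/
theorem reynolds_transport (φ : (Fin 3 → ℝ) → ℝ) (ρ : (Fin 3 → ℝ) → (Fin 3 → ℝ))
    (hφ : ContDiff ℝ 1 φ) (hρ : ContDiff ℝ 1 ρ)
    (K : Set (Fin 3 → ℝ)) (hK : IsCompact K) (hKm : MeasurableSet K) :
    HasDerivAt
      (fun ε : ℝ => ∫ x in K, φ (x + ε • ρ x) * (1 + ε • jacMat ρ x).det)
      (∫ x in K, (fderiv ℝ φ x (ρ x) + φ x * (jacMat ρ x).trace)) 0 :=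
  reynolds_transport_general φ ρ hφ hρ K hK
end
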